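/- For every b ∈ {1, …, n}, every element s ∈ H_1(K̃_b) that does not lie in the image of θ_{1,b} : H_1(K_b) → H_1(K̃_b) satisfies ψ_{b,d}(s) ≠ 0 for every d with b ≤ d ≤ n. -/

import Mathlib

/-- An abstract simplicial complex on a vertex type `α`: a collection of nonempty
finite subsets of `α` closed under passing to nonempty subsets. -/
structure AbsSC (α : Type) where
  faces : Set (Finset α)
  not_empty_mem : ∅ ∉ faces
  down_closed : ∀ {s t : Finset α}, s ∈ faces → t ⊆ s → t.Nonempty → t ∈ faces

namespace AbsSC

variable {α : Type}

/-- The vertex set of an abstract simplicial complex. -/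
def vertexSet (K : AbsSC α) : Set α := {v | {v} ∈ K.faces}

/-- The type of `q`-simplices (faces with `q+1` vertices). -/
def simplices (K : AbsSC α) (q : ℕ) : Type :=
  {s : Finset α // s ∈ K.faces ∧ s.card = q + 1}

/-- The space of `q`-chains over `ℤ/2`: formal sums of `q`-simplices. -/
abbrev Chain (K : AbsSC α) (q : ℕ) : Type := K.simplices q →₀ ZMod 2

/-- The sum of the `q`-dimensional faces of a `(q+1)`-simplex. -/
noncomputable def faceChain (K : AbsSC α) (q : ℕ) (s : K.simplices (q + 1)) : K.Chain q :=
  ∑ t ∈ (s.1.powersetCard (q + 1)).attach,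
    Finsupp.single
      ⟨t.1, by
        obtain ⟨hsub, hcard⟩ := Finset.mem_powersetCard.mp t.2
        refine ⟨K.down_closed s.2.1 hsub ?_, hcard⟩
        rw [← Finset.card_pos, hcard]
        omega⟩
      (1 : ZMod 2)

/-- The boundary map `∂_{q+1} : C_{q+1}(K) → C_q(K)`, sending each `(q+1)`-simplex to
the sum of its `q`-dimensional faces. -/
noncomputable def boundary (K : AbsSC α) (q : ℕ) :
    K.Chain (q + 1) →ₗ[ZMod 2] K.Chain q :=
  Finsupp.lsum (ZMod 2) fun s => LinearMap.toSpanSingleton (ZMod 2) (K.Chain q) (K.faceChain q s)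

/-- The cycle subspace: `ker ∂_q` (all of `C_0` in degree `0`). -/
noncomputable def cycles (K : AbsSC α) : (q : ℕ) → Submodule (ZMod 2) (K.Chain q)
  | 0 => ⊤
  | q + 1 => LinearMap.ker (K.boundary q)

/-- The boundaries, viewed as a submodule of the cycles. -/
noncomputable def boundariesIn (K : AbsSC α) (q : ℕ) :
    Submodule (ZMod 2) (K.cycles q) :=
  Submodule.comap (K.cycles q).subtype (LinearMap.range (K.boundary q))

/-- The `q`-th simplicial homology over `ℤ/2`: `H_q(K) = ker ∂_q / im ∂_{q+1}`. -/
def Homology (K : AbsSC α) (q : ℕ) : Type :=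
  (K.cycles q) ⧸ (K.boundariesIn q)

noncomputable instance (K : AbsSC α) (q : ℕ) : AddCommGroup (K.Homology q) :=
  inferInstanceAs (AddCommGroup ((K.cycles q) ⧸ (K.boundariesIn q)))

noncomputable instance (K : AbsSC α) (q : ℕ) : Module (ZMod 2) (K.Homology q) :=
  inferInstanceAs (Module (ZMod 2) ((K.cycles q) ⧸ (K.boundariesIn q)))

/-- The homology class of a cycle. -/
noncomputable def hClass (K : AbsSC α) (q : ℕ) (c : K.Chain q) (hc : c ∈ K.cycles q) :
    K.Homology q :=
  Submodule.Quotient.mk ⟨c, hc⟩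

/-- The chain map induced by an inclusion of simplicial complexes. -/
noncomputable def chainMap (K L : AbsSC α) (h : K.faces ⊆ L.faces) (q : ℕ) :
    K.Chain q →ₗ[ZMod 2] L.Chain q :=
  Finsupp.lmapDomain (ZMod 2) (ZMod 2) fun s : K.simplices q =>
    (⟨s.1, h s.2.1, s.2.2⟩ : L.simplices q)

/-- `θ` is the map on `q`-th homology induced by the inclusion `K ⊆ L`: it sends the
class of every cycle `c` of `K` to the class of the image chain of `c` in `L`. -/
def InducedHom (K L : AbsSC α) (q : ℕ)
    (θ : K.Homology q →ₗ[ZMod 2] L.Homology q) : Prop :=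
  ∃ h : K.faces ⊆ L.faces,
    ∀ (c : K.Chain q) (hc : c ∈ K.cycles q),
      ∃ hc' : chainMap K L h q c ∈ L.cycles q,
        θ (K.hClass q c hc) = L.hClass q (chainMap K L h q c) hc'

end AbsSC

/-- The faces of the gluing stars `S = S_1 ⊔ ⋯ ⊔ S_k`: for each `j`, the vertex `{z j}`,
the vertices `{v}` for `v ∈ P j`, and the edges `{z j, v}` for `v ∈ P j`. -/
def starFaces {α : Type} [DecidableEq α] {k : ℕ} (P : Fin k → Set α) (z : Fin k → α) :
    Set (Finset α) :=
  {s | ∃ j : Fin k, s = {z j} ∨ ∃ v ∈ P j, s = {v} ∨ s = {z j, v}}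

section Tower

variable {W : ℕ → Type} [∀ i, AddCommGroup (W i)] [∀ i, Module (ZMod 2) (W i)]

/-- The composite `φ_{i,j} = φ_{j-1} ∘ ⋯ ∘ φ_i` of the connecting maps of a tower
(the identity when `i = j`). -/
noncomputable def comps (φ : ∀ i, W i →ₗ[ZMod 2] W (i + 1)) {i j : ℕ} (h : i ≤ j) :
    W i →ₗ[ZMod 2] W j :=
  Nat.leRecOn (C := fun m => W i →ₗ[ZMod 2] W m) h (fun {m} g => (φ m).comp g) LinearMap.id

/-- `s ∈ W b` has persistence interval `(b, d)` with finite death `d ∈ {b+1, …, n}`: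
`s ∉ im φ_{b-1}`, `φ_{b,d'}(s) ∉ im φ_{b-1,d'}` for all `b ≤ d' < d`, and
`φ_{b,d}(s) ∈ im φ_{b-1,d}`. -/
def HasPersIntervalFin (φ : ∀ i, W i →ₗ[ZMod 2] W (i + 1)) (n b d : ℕ) (s : W b) : Prop :=
  ∃ (_ : 1 ≤ b) (hbd : b < d) (_ : d ≤ n),
    s ∉ LinearMap.range (comps φ (Nat.sub_le b 1)) ∧
    (∀ (d' : ℕ) (hd' : b ≤ d'), d' < d →
      comps φ hd' s ∉ LinearMap.range (comps φ (Nat.le_trans (Nat.sub_le b 1) hd'))) ∧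
    comps φ (Nat.le_of_lt hbd) s ∈
      LinearMap.range (comps φ (Nat.le_trans (Nat.sub_le b 1) (Nat.le_of_lt hbd)))

/-- `s ∈ W b` has persistence interval `(b, ∞)`: `s ∉ im φ_{b-1}` and
`φ_{b,d'}(s) ∉ im φ_{b-1,d'}` for all `b ≤ d' ≤ n`. -/
def HasPersIntervalInf (φ : ∀ i, W i →ₗ[ZMod 2] W (i + 1)) (n b : ℕ) (s : W b) : Prop :=
  ∃ _ : 1 ≤ b,
    s ∉ LinearMap.range (comps φ (Nat.sub_le b 1)) ∧
    ∀ (d' : ℕ) (hd' : b ≤ d'), d' ≤ n →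
      comps φ hd' s ∉ LinearMap.range (comps φ (Nat.le_trans (Nat.sub_le b 1) hd'))

end Tower

/-! A class of `K̃_b` killed by `ψ_{b,d}` is represented by a cycle that bounds a 2-chain of
`K̃_d`. The gluing stars are 1-dimensional, so every 2-simplex of `K̃_d` is a simplex of `K_d` and
misses the new vertices `z_j`; hence so does every edge of the cycle. An edge of `K̃_b` missing
all `z_j` is an edge of `K_b`, so the cycle lives in `K_b` and the class lies in the image of
`θ_b`. -/

namespace AbsSC

variable {α : Type} {K L M : AbsSC α} {q : ℕ}

lemma hClass_surjective (x : K.Homology q) : ∃ (c : K.Chain q) (hc : c ∈ K.cycles q),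
    K.hClass q c hc = x := by
  obtain ⟨⟨c, hc⟩, rfl⟩ := Submodule.Quotient.mk_surjective _ x
  exact ⟨c, hc, rfl⟩

lemma hClass_eq_zero_iff {c : K.Chain q} (hc : c ∈ K.cycles q) :
    K.hClass q c hc = 0 ↔ c ∈ LinearMap.range (K.boundary q) :=
  Submodule.Quotient.mk_eq_zero _

lemma hClass_congr {c c' : K.Chain q} (hcc : c = c') (hc : c ∈ K.cycles q)
    (hc' : c' ∈ K.cycles q) : K.hClass q c hc = K.hClass q c' hc' := by
  subst hcc; rfl

lemma exists_subset_of_mem_support_boundary {w : K.Chain (q + 1)} {e : K.simplices q}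
    (he : e ∈ (K.boundary q w).support) : ∃ t : K.simplices (q + 1), e.1 ⊆ t.1 := by
  rw [boundary, Finsupp.lsum_apply] at he
  obtain ⟨t, -, het⟩ := Finsupp.mem_support_finsetSum e he
  have he_face : e ∈ (K.faceChain q t).support := by
    simp only [LinearMap.toSpanSingleton_apply, Finsupp.mem_support_iff, Finsupp.coe_smul,
      Pi.smul_apply, smul_eq_mul, ne_eq, mul_eq_zero, not_or] at het
    exact Finsupp.mem_support_iff.mpr het.2
  rw [faceChain] at he_face
  obtain ⟨u, -, heu⟩ := Finsupp.mem_support_finsetSum e he_face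
  rw [Finset.mem_singleton.mp (Finsupp.support_single_subset heu)]
  exact ⟨t, (Finset.mem_powersetCard.mp u.2).1⟩

section ChainMap

variable (h : K.faces ⊆ L.faces)

lemma chainMap_apply (c : K.Chain q) :
    chainMap K L h q c =
      Finsupp.mapDomain (fun s : K.simplices q => (⟨s.1, h s.2.1, s.2.2⟩ : L.simplices q)) c :=
  rfl

lemma simplexMap_injective :
    Function.Injective fun s : K.simplices q => (⟨s.1, h s.2.1, s.2.2⟩ : L.simplices q) := by
  intro s t hst
  have hst' := congrArg Subtype.val hst
  exact Subtype.ext hst'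

lemma chainMap_injective : Function.Injective (chainMap K L h q) :=
  Finsupp.mapDomain_injective (simplexMap_injective h)

lemma chainMap_apply_simplex (c : K.Chain q) (e : K.simplices q) :
    chainMap K L h q c ⟨e.1, h e.2.1, e.2.2⟩ = c e :=
  Finsupp.mapDomain_apply (simplexMap_injective h) c e

lemma mem_support_chainMap {c : K.Chain q} {e : K.simplices q} (he : e ∈ c.support) :
    (⟨e.1, h e.2.1, e.2.2⟩ : L.simplices q) ∈ (chainMap K L h q c).support :=
  Finsupp.mem_support_iff.mpr <|
    (chainMap_apply_simplex h c e).trans_ne (Finsupp.mem_support_iff.mp he)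

lemma chainMap_self (c : K.Chain q) : chainMap K K (subset_refl _) q c = c := by
  rw [chainMap_apply]
  exact Finsupp.mapDomain_id

lemma chainMap_chainMap (h' : L.faces ⊆ M.faces) (c : K.Chain q) :
    chainMap L M h' q (chainMap K L h q c) = chainMap K M (h.trans h') q c := by
  rw [chainMap_apply, chainMap_apply, chainMap_apply]
  erw [← Finsupp.mapDomain_comp]
  rfl

lemma chainMap_faceChain (s : K.simplices (q + 1)) :
    chainMap K L h q (K.faceChain q s) = L.faceChain q ⟨s.1, h s.2.1, s.2.2⟩ := by
  rw [chainMap_apply]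
  unfold faceChain
  rw [Finsupp.mapDomain_finsetSum]
  exact Finset.sum_congr rfl fun _ _ => Finsupp.mapDomain_single

lemma boundary_chainMap (c : K.Chain (q + 1)) :
    L.boundary q (chainMap K L h (q + 1) c) = chainMap K L h q (K.boundary q c) := by
  suffices (L.boundary q).comp (chainMap K L h (q + 1)) = (chainMap K L h q).comp (K.boundary q)
    from LinearMap.congr_fun this c
  refine Finsupp.lhom_ext fun s a => ?_
  simp only [LinearMap.comp_apply]
  rw [chainMap_apply, Finsupp.mapDomain_single]
  unfold boundary
  rw [Finsupp.lsum_single]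
  erw [Finsupp.lsum_single]
  simp only [LinearMap.toSpanSingleton_apply]
  rw [map_smul, chainMap_faceChain]

lemma mem_cycles_of_chainMap_mem_cycles {c : K.Chain q}
    (hc : chainMap K L h q c ∈ L.cycles q) : c ∈ K.cycles q := by
  cases q with
  | zero => trivial
  | succ q =>
    refine chainMap_injective h ?_
    rw [← boundary_chainMap, map_zero]
    exact hc

lemma exists_chainMap_eq {c : L.Chain q} (hsupp : ∀ e ∈ c.support, e.1 ∈ K.faces) :
    ∃ c' : K.Chain q, chainMap K L h q c' = c := by
  refine ⟨c.comapDomain _ (simplexMap_injective h).injOn, ?_⟩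
  refine Finsupp.mapDomain_comapDomain _ (simplexMap_injective h) c fun e he => ?_
  exact ⟨⟨e.1, hsupp e he, e.2.2⟩, rfl⟩

end ChainMap

section InducedHom

variable {θ : K.Homology q →ₗ[ZMod 2] L.Homology q}

lemma inducedHom_id : InducedHom K K q LinearMap.id :=
  ⟨subset_refl _, fun c hc =>
    ⟨(chainMap_self c).symm ▸ hc, hClass_congr (chainMap_self c).symm _ _⟩⟩

lemma InducedHom.comp {θ' : L.Homology q →ₗ[ZMod 2] M.Homology q} (hθ : InducedHom K L q θ)
    (hθ' : InducedHom L M q θ') : InducedHom K M q (θ'.comp θ) := by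
  obtain ⟨h, hθ⟩ := hθ
  obtain ⟨h', hθ'⟩ := hθ'
  refine ⟨h.trans h', fun c hc => ?_⟩
  obtain ⟨hc₁, hθc⟩ := hθ c hc
  obtain ⟨hc₂, hθ'c⟩ := hθ' _ hc₁
  have hcomp := chainMap_chainMap h h' c
  exact ⟨hcomp ▸ hc₂, by rw [LinearMap.comp_apply, hθc, hθ'c]; exact hClass_congr hcomp _ _⟩

lemma InducedHom.hClass_mem_range (hθ : InducedHom K L q θ) {c : L.Chain q}
    (hc : c ∈ L.cycles q) (hsupp : ∀ e ∈ c.support, e.1 ∈ K.faces) :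
    L.hClass q c hc ∈ LinearMap.range θ := by
  obtain ⟨h, hθc⟩ := hθ
  obtain ⟨c', rfl⟩ := exists_chainMap_eq h hsupp
  have hc' := mem_cycles_of_chainMap_mem_cycles h hc
  exact ⟨K.hClass q c' hc', (hθc c' hc').2⟩

end InducedHom

end AbsSC

section Comps

variable {W : ℕ → Type} [∀ i, AddCommGroup (W i)] [∀ i, Module (ZMod 2) (W i)]
  (φ : ∀ i, W i →ₗ[ZMod 2] W (i + 1))

lemma comps_self {i : ℕ} (h : i ≤ i) : comps φ h = LinearMap.id :=
  Nat.leRecOn_self _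

lemma comps_succ {i j : ℕ} (h : i ≤ j) (h' : i ≤ j + 1) :
    comps φ h' = (φ j).comp (comps φ h) :=
  Nat.leRecOn_succ h _

end Comps

lemma AbsSC.InducedHom.comps {α : Type} {L : ℕ → AbsSC α} {q : ℕ}
    {ψ : ∀ i, (L i).Homology q →ₗ[ZMod 2] (L (i + 1)).Homology q} {b d : ℕ} (hbd : b ≤ d)
    (hψ : ∀ i, b ≤ i → i < d → InducedHom (L i) (L (i + 1)) q (ψ i)) :
    InducedHom (L b) (L d) q (comps ψ hbd) := by
  induction d, hbd using Nat.le_induction with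
  | base => rw [comps_self]; exact inducedHom_id
  | succ d hbd ih =>
    rw [comps_succ ψ hbd]
    exact (ih fun i hbi hid => hψ i hbi (by omega)).comp (hψ d hbd (by omega))

section Stars

variable {α : Type} [DecidableEq α] {k : ℕ} {P : Fin k → Set α} {z : Fin k → α}
  {F : Set (Finset α)} {s : Finset α}

lemma mem_of_mem_union_starFaces_of_two_lt_card (hs : s ∈ F ∪ starFaces P z)
    (h3 : 2 < s.card) : s ∈ F := by
  obtain hs | ⟨j, rfl | ⟨v, -, rfl | rfl⟩⟩ := hs
  · exact hs
  · simp at h3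
  · simp at h3
  · exact absurd h3 Finset.card_le_two.not_gt

lemma mem_of_mem_union_starFaces_of_forall_notMem (hs : s ∈ F ∪ starFaces P z)
    (h2 : 2 ≤ s.card) (hz : ∀ j, z j ∉ s) : s ∈ F := by
  obtain hs | ⟨j, rfl | ⟨v, -, rfl | rfl⟩⟩ := hs
  · exact hs
  · simp at h2
  · simp at h2
  · exact absurd (Finset.mem_insert_self _ _) (hz j)

end Stars

theorem stmt16_general {α : Type} [DecidableEq α] (n k : ℕ)
    (K Kt : ℕ → AbsSC α)
    (P : Fin k → Set α)
    (z : Fin k → α)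
    (hznew : ∀ (j : Fin k) (i : ℕ), i ≤ n → z j ∉ (K i).vertexSet)
    (hKt : ∀ i, 1 ≤ i → i ≤ n → (Kt i).faces = (K i).faces ∪ starFaces P z)
    (ψ : ∀ i : ℕ, (Kt i).Homology 1 →ₗ[ZMod 2] (Kt (i + 1)).Homology 1)
    (θ : ∀ i : ℕ, (K i).Homology 1 →ₗ[ZMod 2] (Kt i).Homology 1)
    (hψ : ∀ i, i < n → AbsSC.InducedHom (Kt i) (Kt (i + 1)) 1 (ψ i))
    (hθ : ∀ i, i ≤ n → AbsSC.InducedHom (K i) (Kt i) 1 (θ i))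
    (b : ℕ) (hb1 : 1 ≤ b) (hbn : b ≤ n)
    (s : (Kt b).Homology 1)
    (hs : s ∉ LinearMap.range (θ b)) :
    ∀ (d : ℕ) (hd : b ≤ d), d ≤ n → comps ψ hd s ≠ 0 := by
  intro d hd hdn hzero
  obtain ⟨c, hc, rfl⟩ := AbsSC.hClass_surjective s
  obtain ⟨hincl, hpush⟩ := AbsSC.InducedHom.comps hd fun i _ hid => hψ i (by omega)
  obtain ⟨hc', hpush_c⟩ := hpush c hc
  obtain ⟨w, hw⟩ := (AbsSC.hClass_eq_zero_iff hc').1 (hpush_c ▸ hzero)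
  have hfilling_avoids_apex : ∀ (t : (Kt d).simplices 2) (j : Fin k), z j ∉ t.1 := by
    intro t j hzt
    have ht_glued : t.1 ∈ (K d).faces ∪ starFaces P z := hKt d (by omega) hdn ▸ t.2.1
    have ht : t.1 ∈ (K d).faces :=
      mem_of_mem_union_starFaces_of_two_lt_card ht_glued (by rw [t.2.2]; omega)
    exact hznew j d hdn <|
      (K d).down_closed ht (Finset.singleton_subset_iff.2 hzt) (Finset.singleton_nonempty _)
  refine hs ((hθ b hbn).hClass_mem_range hc fun e he => ?_)
  have he_image := AbsSC.mem_support_chainMap hincl he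
  rw [← hw] at he_image
  obtain ⟨t, het⟩ := AbsSC.exists_subset_of_mem_support_boundary he_image
  have he_glued : e.1 ∈ (K b).faces ∪ starFaces P z := hKt b hb1 hbn ▸ e.2.1
  exact mem_of_mem_union_starFaces_of_forall_notMem he_glued e.2.2.ge
    fun j hj => hfilling_avoids_apex t j (het hj)

/-- for every `b ∈ {1, …, n}`, every `s ∈ H_1(K̃_b)` not lying in the
image of `θ_{1,b} : H_1(K_b) → H_1(K̃_b)` satisfies `ψ_{b,d}(s) ≠ 0` for every
`b ≤ d ≤ n`. -/
theorem stmt16 {α : Type} [DecidableEq α] (n k : ℕ)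
    (K Kt : ℕ → AbsSC α)
    (hK0 : (K 0).faces = ∅)
    (hKt0 : (Kt 0).faces = ∅)
    (hKmono : ∀ i, i < n → (K i).faces ⊆ (K (i + 1)).faces)
    (hKtmono : ∀ i, i < n → (Kt i).faces ⊆ (Kt (i + 1)).faces)
    (P : Fin k → Set α)
    (hPne : ∀ j, (P j).Nonempty)
    (hPdisj : Pairwise (Function.onFun Disjoint P))
    (hPunion : (⋃ j, P j) = (K 1).vertexSet)
    (z : Fin k → α)
    (hzinj : Function.Injective z)
    (hznew : ∀ (j : Fin k) (i : ℕ), i ≤ n → z j ∉ (K i).vertexSet)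
    (hKt : ∀ i, 1 ≤ i → i ≤ n → (Kt i).faces = (K i).faces ∪ starFaces P z)
    (φ : ∀ i : ℕ, (K i).Homology 1 →ₗ[ZMod 2] (K (i + 1)).Homology 1)
    (ψ : ∀ i : ℕ, (Kt i).Homology 1 →ₗ[ZMod 2] (Kt (i + 1)).Homology 1)
    (θ : ∀ i : ℕ, (K i).Homology 1 →ₗ[ZMod 2] (Kt i).Homology 1)
    (hφ : ∀ i, i < n → AbsSC.InducedHom (K i) (K (i + 1)) 1 (φ i))
    (hψ : ∀ i, i < n → AbsSC.InducedHom (Kt i) (Kt (i + 1)) 1 (ψ i))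
    (hθ : ∀ i, i ≤ n → AbsSC.InducedHom (K i) (Kt i) 1 (θ i))
    (hsq : ∀ i, i < n → (θ (i + 1)).comp (φ i) = (ψ i).comp (θ i))
    (b : ℕ) (hb1 : 1 ≤ b) (hbn : b ≤ n)
    (s : (Kt b).Homology 1)
    (hs : s ∉ LinearMap.range (θ b)) :
    ∀ (d : ℕ) (hd : b ≤ d), d ≤ n → comps ψ hd s ≠ 0 :=
  stmt16_general n k K Kt P z hznew hKt ψ θ hψ hθ b hb1 hbn s hs
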